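/- In a tree G_n on n nodes, let s* = v_0, v_1, …, v_d be a path with subtree sizes Z_h = |T_{v_h}^{s*}| all positive (so Z_h ≥ Z_{h+1} + 1). For d ≥ 2, if R(v_d, G_n) ≥ R(s*, G_n) then R(v_{d−1}, G_n) > R(s*, G_n). Hence the error event for the suspect at distance d implies the error event for the suspect at distance d − 1, so the error probability is non-increasing in d. -/

import Mathlib

/-!
Moving the root across an edge `a – b` changes only the subtrees of `a` and `b`, which gives the
ratio `R(b) / R(a) = |T_b^a| / |T_a^b|`. Along the path `v_0, …, v_d` the numerators
`|T_{v_{h+1}}^{v_h}|` strictly decrease and the denominators `|T_{v_h}^{v_{h+1}}|` strictly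
increase, so `h ↦ R(v_h)` is strictly log-concave. Hence if `R(v_{d-1}) ≤ R(v_d)` the sequence is
strictly increasing up to `d - 1`, and otherwise `R(v_{d-1}) > R(v_d) ≥ R(v_0)`.
-/

/-- `subtreeSet G u v` is the subtree `T_u^v` rooted at `u` when the tree is rooted at `v`. -/
def subtreeSet {V : Type*} (G : SimpleGraph V) (u v : V) : Set V :=
  {w | ∀ p : G.Walk v w, u ∈ p.support}

/-- Rumor centrality `R(s, G_n) = n! · ∏_{u} 1 / |T_u^s|`. -/
noncomputable def rumorCentrality {V : Type*} [Fintype V] (G : SimpleGraph V) (s : V) : ℚ :=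
  (Nat.factorial (Fintype.card V) : ℚ) * ∏ u : V, 1 / ((subtreeSet G u s).ncard : ℚ)

open SimpleGraph

section LogConcave

variable {K : Type*} [Field K] [LinearOrder K] [IsStrictOrderedRing K] {R : ℕ → K}

lemma lt_succ_of_div_lt_div_of_le (hpos : ∀ h, 0 < R h) {h : ℕ}
    (hdiv : R (h + 2) / R (h + 1) < R (h + 1) / R h) (hle : R (h + 1) ≤ R (h + 2)) :
    R h < R (h + 1) :=
  (one_lt_div (hpos h)).1 (((one_le_div (hpos _)).2 hle).trans_lt hdiv)

theorem lt_pred_of_le_of_div_lt_div (hpos : ∀ h, 0 < R h) {d : ℕ} (hd : 2 ≤ d)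
    (hdiv : ∀ h, h + 2 ≤ d → R (h + 2) / R (h + 1) < R (h + 1) / R h) (hR : R 0 ≤ R d) :
    R 0 < R (d - 1) := by
  rcases lt_or_ge (R d) (R (d - 1)) with hlast | hlast
  · exact hR.trans_lt hlast
  have hincr : ∀ j h, h + j + 2 = d → R h < R (h + 1) := by
    intro j
    induction j with
    | zero =>
      rintro h rfl
      exact lt_succ_of_div_lt_div_of_le hpos (hdiv h le_rfl) hlast
    | succ j ih =>
      intro h hj
      exact lt_succ_of_div_lt_div_of_le hpos (hdiv h (by omega)) (ih (h + 1) (by omega)).le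
  have hmono : StrictMonoOn R (Set.Iic (d - 1)) :=
    strictMonoOn_Iic_of_lt_succ fun h hh => hincr (d - 2 - h) h (by omega)
  exact hmono (by simp) (by simp) (by omega)

end LogConcave

section RumorCentrality

variable {V : Type*} {G : SimpleGraph V}

lemma mem_subtreeSet_self (u a : V) : u ∈ subtreeSet G u a :=
  fun p => p.end_mem_support

lemma subtreeSet_self (r : V) : subtreeSet G r r = Set.univ :=
  Set.eq_univ_of_forall fun _ p => p.start_mem_support

lemma subtreeSet_subset_of_adj {a b w : V} (hab : G.Adj a b) (hwa : w ≠ a) :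
    subtreeSet G w a ⊆ subtreeSet G w b := fun _ hx p => by
  simpa [hwa] using hx (Walk.cons hab p)

lemma subtreeSet_eq_of_adj {a b w : V} (hab : G.Adj a b) (hwa : w ≠ a) (hwb : w ≠ b) :
    subtreeSet G w a = subtreeSet G w b :=
  (subtreeSet_subset_of_adj hab hwa).antisymm (subtreeSet_subset_of_adj hab.symm hwb)

lemma SimpleGraph.IsAcyclic.subtreeSet_ssubset {a b c : V} (hG : G.IsAcyclic) (hab : G.Adj a b)
    (hbc : G.Adj b c) (hac : a ≠ c) : subtreeSet G c b ⊂ subtreeSet G b a := by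
  classical
  refine ⟨fun x hx p => ?_, fun h => ?_⟩
  · by_contra hbp
    have hcp : c ∈ p.support := by simpa [hbc.ne'] using hx (Walk.cons hab.symm p)
    -- a walk `b → a → c` avoiding the edge `b – c`, which is a bridge
    have hbridge := isBridge_iff_forall_walk_mem_edges.1
      (isAcyclic_iff_forall_adj_isBridge.1 hG hbc) (Walk.cons hab.symm (p.takeUntil c hcp))
    rw [Walk.edges_cons, List.mem_cons, Sym2.eq_iff] at hbridge
    rcases hbridge with (⟨-, rfl⟩ | ⟨rfl, -⟩) | hmem
    · exact hac rfl
    · exact hab.ne rfl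
    · exact hbp (p.support_takeUntil_subset_support hcp (Walk.fst_mem_support_of_mem_edges _ hmem))
  · simpa [hbc.ne'] using h (mem_subtreeSet_self b a) Walk.nil

variable [Fintype V]

lemma ncard_subtreeSet_pos (u a : V) : 0 < (subtreeSet G u a).ncard :=
  (Set.ncard_pos (Set.toFinite _)).2 ⟨u, mem_subtreeSet_self u a⟩

lemma prod_ncard_subtreeSet_mul_of_adj {a b : V} (hab : G.Adj a b) :
    (∏ w, (subtreeSet G w a).ncard) * (subtreeSet G a b).ncard
      = (∏ w, (subtreeSet G w b).ncard) * (subtreeSet G b a).ncard := by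
  classical
  have hsplit : ∀ f : V → ℕ, ∏ w, f w = (∏ w ∈ Finset.univ \ {a, b}, f w) * (f a * f b) :=
    fun f => by rw [← Finset.prod_sdiff (Finset.subset_univ {a, b}), Finset.prod_pair hab.ne]
  have hrest : ∏ w ∈ Finset.univ \ {a, b}, (subtreeSet G w a).ncard
      = ∏ w ∈ Finset.univ \ {a, b}, (subtreeSet G w b).ncard :=
    Finset.prod_congr rfl fun w hw => by
      simp only [Finset.mem_sdiff, Finset.mem_insert, Finset.mem_singleton, not_or] at hw
      rw [subtreeSet_eq_of_adj hab hw.2.1 hw.2.2]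
  rw [hsplit, hsplit, hrest, subtreeSet_self, subtreeSet_self]
  ring

lemma rumorCentrality_eq_div (s : V) :
    rumorCentrality G s
      = (Fintype.card V).factorial / ∏ u, ((subtreeSet G u s).ncard : ℚ) := by
  simp [rumorCentrality, div_eq_mul_inv, Finset.prod_inv_distrib]

lemma rumorCentrality_div_of_adj {a b : V} (hab : G.Adj a b) :
    rumorCentrality G b / rumorCentrality G a
      = (subtreeSet G b a).ncard / (subtreeSet G a b).ncard := by
  have hprod : ∀ s : V, ∏ u, ((subtreeSet G u s).ncard : ℚ) ≠ 0 := fun s =>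
    Finset.prod_ne_zero_iff.2 fun u _ => by exact_mod_cast (ncard_subtreeSet_pos u s).ne'
  rw [rumorCentrality_eq_div, rumorCentrality_eq_div,
    div_div_div_cancel_left' _ _ (by positivity), div_eq_div_iff (hprod b)
      (by exact_mod_cast (ncard_subtreeSet_pos a b).ne')]
  exact_mod_cast (prod_ncard_subtreeSet_mul_of_adj hab).trans (mul_comm _ _)

lemma SimpleGraph.IsAcyclic.rumorCentrality_div_lt_div {a b c : V} (hG : G.IsAcyclic) (hab : G.Adj a b)
    (hbc : G.Adj b c) (hac : a ≠ c) :
    rumorCentrality G c / rumorCentrality G b < rumorCentrality G b / rumorCentrality G a := by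
  rw [rumorCentrality_div_of_adj hbc, rumorCentrality_div_of_adj hab]
  have hnum := Set.ncard_lt_ncard (hG.subtreeSet_ssubset hab hbc hac)
  have hden := Set.ncard_lt_ncard (hG.subtreeSet_ssubset hbc.symm hab.symm hac.symm)
  exact div_lt_div₀ (by exact_mod_cast hnum) (by exact_mod_cast hden.le) (by positivity)
    (by exact_mod_cast ncard_subtreeSet_pos a b)

lemma rumorCentrality_pos (s : V) : 0 < rumorCentrality G s := by
  rw [rumorCentrality_eq_div]
  exact div_pos (by positivity) (Finset.prod_pos fun u _ => by
    exact_mod_cast ncard_subtreeSet_pos u s)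

end RumorCentrality

/-- Along a path `s* = v 0, v 1, …, v d` in a tree (`d ≥ 2`), if `R(v d) ≥ R(s*)`
then `R(v (d−1)) > R(s*)`: the error event at distance `d` implies the error event
at distance `d − 1`. -/
theorem error_implies_error_closer {V : Type*} [Fintype V]
    (G : SimpleGraph V) (hG : G.IsTree) (d : ℕ) (hd : 2 ≤ d) (v : ℕ → V)
    (hadj : ∀ h < d, G.Adj (v h) (v (h + 1)))
    (hinj : ∀ i ≤ d, ∀ j ≤ d, v i = v j → i = j)
    (hR : rumorCentrality G (v 0) ≤ rumorCentrality G (v d)) :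
    rumorCentrality G (v 0) < rumorCentrality G (v (d - 1)) := by
  refine lt_pred_of_le_of_div_lt_div (R := fun h => rumorCentrality G (v h))
    (fun h => rumorCentrality_pos _) hd (fun h hh => ?_) hR
  have hne : v h ≠ v (h + 2) := fun heq => by
    have := hinj h (by omega) (h + 2) hh heq
    omega
  exact hG.isAcyclic.rumorCentrality_div_lt_div (hadj h (by omega)) (hadj (h + 1) (by omega)) hne
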